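/- Let u(x,y,z) = (x−y)z + (x−y)²z² + (x²+y²)² + z². Then u is continuous, bounded below, and coercive, but S[u] is not h-convex: for all sufficiently small t > 0, with h_t = (t,t,0), one has S[u](h_t) + S[u](h_t⁻¹) < 2 S[u](0,0,0). Specifically, S[u](h_t) ≤ −2t³ + 4t⁶ + 17t⁴, S[u](h_t⁻¹) ≥ 0, and S[u](0,0,0) = 0. -/

import Mathlib

noncomputable section

abbrev H3 : Type := ℝ × ℝ × ℝ

def hmul (p q : H3) : H3 :=
  (p.1 + q.1, p.2.1 + q.2.1, p.2.2 + q.2.2 + (p.1 * q.2.1 - q.1 * p.2.1) / 2)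

/-- Membership in the left-invariant horizontal plane through `p`:
`y_p x − x_p y + 2z − 2z_p = 0`. -/
def onPlane (p q : H3) : Prop :=
  p.2.1 * q.1 - p.1 * q.2.1 + 2 * q.2.2 - 2 * p.2.2 = 0

/-- The partial convexification operator `S`. -/
def Sop (u : H3 → ℝ) (p : H3) : ℝ :=
  sInf { s : ℝ | ∃ (c : Fin 3 → ℝ) (q : Fin 3 → H3),
    (∀ i, c i ∈ Set.Icc (0 : ℝ) 1) ∧ (∑ i, c i) = 1 ∧ (∀ i, onPlane p (q i)) ∧
    (∑ i, c i • q i) = p ∧ s = ∑ i, c i * u (q i) }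

/-- Coercivity: `inf_{|p| ≥ R} u(p)/|p| → ∞` as `R → ∞`. -/
def Coercive (u : H3 → ℝ) : Prop :=
  ∀ C : ℝ, ∃ R : ℝ, ∀ p : H3, R ≤ ‖p‖ → C ≤ u p / ‖p‖

/-- Horizontal convexity (midpoint inequality along horizontal directions). -/
def hConvex (u : H3 → ℝ) : Prop :=
  ∀ p h : H3, h.2.2 = 0 → 2 * u p ≤ u (hmul p h) + u (hmul p (-h.1, -h.2.1, -h.2.2))

/-!
The function `u` is negative only where `(x - y) z < 0`. The horizontal planes through `0` and
through `h_t⁻¹` are `z = 0` and `2z = t (x - y)`, on which `(x - y) z ≥ 0`, so `u ≥ 0` there and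
`S[u]` vanishes at `0` and is nonnegative at `h_t⁻¹`. The plane through `h_t` contains the points
`(2t, 0, -t²)` and `(0, 2t, t²)` with midpoint `h_t`, where `u` takes the value
`-2t³ + 4t⁶ + 17t⁴`. Together with `S[u](h_t⁻¹) ≤ u(h_t⁻¹) = 4t⁴` this gives
`S[u](h_t) + S[u](h_t⁻¹) ≤ -2t³ + O(t⁴) < 0 = 2 S[u](0)` for small `t`.
-/

open Set

def SopValues (u : H3 → ℝ) (p : H3) : Set ℝ :=
  { s : ℝ | ∃ (c : Fin 3 → ℝ) (q : Fin 3 → H3),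
    (∀ i, c i ∈ Set.Icc (0 : ℝ) 1) ∧ (∑ i, c i) = 1 ∧ (∀ i, onPlane p (q i)) ∧
    (∑ i, c i • q i) = p ∧ s = ∑ i, c i * u (q i) }

theorem onPlane_self (p : H3) : onPlane p p := by
  simp only [onPlane]; ring

theorem le_sum_mul_of_le {ι : Type*} [Fintype ι] {c a : ι → ℝ} {m : ℝ} (hc : ∀ i, 0 ≤ c i)
    (hsum : ∑ i, c i = 1) (ha : ∀ i, m ≤ a i) : m ≤ ∑ i, c i * a i :=
  calc m = ∑ i, c i * m := by rw [← Finset.sum_mul, hsum, one_mul]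
    _ ≤ ∑ i, c i * a i := Finset.sum_le_sum fun i _ => mul_le_mul_of_nonneg_left (ha i) (hc i)

section Sop

variable {u : H3 → ℝ} {p : H3}

theorem midpoint_mem_SopValues {q₁ q₂ : H3} (h₁ : onPlane p q₁) (h₂ : onPlane p q₂)
    (hmid : (1 / 2 : ℝ) • q₁ + (1 / 2 : ℝ) • q₂ = p) :
    (u q₁ + u q₂) / 2 ∈ SopValues u p := by
  refine ⟨![1 / 2, 1 / 2, 0], ![q₁, q₂, p], ?_, ?_, ?_, ?_, ?_⟩
  · intro i; fin_cases i <;> norm_num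
  · simp only [Fin.sum_univ_three, Matrix.cons_val_zero, Matrix.cons_val_one, Matrix.cons_val_two,
      Matrix.head_cons, Matrix.tail_cons]
    norm_num
  · intro i; fin_cases i
    exacts [h₁, h₂, onPlane_self p]
  · simpa [Fin.sum_univ_three] using hmid
  · simp only [Fin.sum_univ_three, Matrix.cons_val_zero, Matrix.cons_val_one, Matrix.cons_val_two,
      Matrix.head_cons, Matrix.tail_cons]
    ring

theorem le_of_mem_SopValues {m s : ℝ} (hm : ∀ q, onPlane p q → m ≤ u q)
    (hs : s ∈ SopValues u p) : m ≤ s := by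
  obtain ⟨c, q, hc, hsum, hplane, -, rfl⟩ := hs
  exact le_sum_mul_of_le (fun i => (hc i).1) hsum fun i => hm _ (hplane i)

theorem le_Sop {m : ℝ} (hm : ∀ q, onPlane p q → m ≤ u q) : m ≤ Sop u p :=
  le_csInf ⟨_, midpoint_mem_SopValues (onPlane_self p) (onPlane_self p) (by module)⟩
    fun _ => le_of_mem_SopValues hm

theorem Sop_le_midpoint (hu : BddBelow (range u)) {q₁ q₂ : H3} (h₁ : onPlane p q₁)
    (h₂ : onPlane p q₂) (hmid : (1 / 2 : ℝ) • q₁ + (1 / 2 : ℝ) • q₂ = p) :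
    Sop u p ≤ (u q₁ + u q₂) / 2 := by
  obtain ⟨m, hm⟩ := hu
  exact csInf_le ⟨m, fun _ => le_of_mem_SopValues fun q _ => hm (mem_range_self q)⟩
    (midpoint_mem_SopValues h₁ h₂ hmid)

theorem Sop_le_apply (hu : BddBelow (range u)) : Sop u p ≤ u p := by
  simpa using Sop_le_midpoint hu (onPlane_self p) (onPlane_self p) (by module)

end Sop

theorem sq_norm_le_of_sq_le {B : ℝ} {p : H3} (hx : p.1 ^ 2 ≤ B) (hy : p.2.1 ^ 2 ≤ B)
    (hz : p.2.2 ^ 2 ≤ B) : ‖p‖ ^ 2 ≤ B := by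
  have hB : 0 ≤ B := (sq_nonneg _).trans hx
  have hp : ‖p‖ ≤ √B := by
    simp only [Prod.norm_def, Real.norm_eq_abs]
    exact max_le (Real.abs_le_sqrt hx) (max_le (Real.abs_le_sqrt hy) (Real.abs_le_sqrt hz))
  exact (Real.le_sqrt (norm_nonneg p) hB).mp hp

theorem coercive_of_sq_norm_le {u : H3 → ℝ} (K : ℝ) (hu : ∀ p, ‖p‖ ^ 2 ≤ u p + K) :
    Coercive u := by
  intro C
  refine ⟨max (C + |K|) 1, fun p hp => ?_⟩
  have h₁ : 1 ≤ ‖p‖ := (le_max_right _ _).trans hp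
  have hC : C + |K| ≤ ‖p‖ := (le_max_left _ _).trans hp
  have hK : 1 * |K| ≤ ‖p‖ * (‖p‖ - C) :=
    mul_le_mul h₁ (by linarith) (abs_nonneg K) (norm_nonneg p)
  rw [le_div_iff₀ (one_pos.trans_le h₁)]
  nlinarith [hu p, le_abs_self K]

def exampleU (p : H3) : ℝ :=
  (p.1 - p.2.1) * p.2.2 + (p.1 - p.2.1) ^ 2 * p.2.2 ^ 2 + (p.1 ^ 2 + p.2.1 ^ 2) ^ 2 + p.2.2 ^ 2

theorem exampleU_ge (p : H3) : -(1 / 4) ≤ exampleU p := by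
  obtain ⟨x, y, z⟩ := p
  simp only [exampleU]
  nlinarith [sq_nonneg ((x - y) * z + 1 / 2), sq_nonneg (x ^ 2 + y ^ 2), sq_nonneg z]

theorem bddBelow_range_exampleU : BddBelow (range exampleU) :=
  ⟨-(1 / 4), forall_mem_range.mpr exampleU_ge⟩

theorem sq_norm_le_exampleU (p : H3) : ‖p‖ ^ 2 ≤ exampleU p + 5 / 4 := by
  obtain ⟨x, y, z⟩ := p
  apply sq_norm_le_of_sq_le <;> simp only [exampleU]
  · nlinarith [sq_nonneg ((x - y) * z + 1 / 2), sq_nonneg (x ^ 2 - 1), sq_nonneg (x * y),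
      sq_nonneg z]
  · nlinarith [sq_nonneg ((x - y) * z + 1 / 2), sq_nonneg (y ^ 2 - 1), sq_nonneg (x * y),
      sq_nonneg z]
  · nlinarith [sq_nonneg ((x - y) * z + 1 / 2), sq_nonneg (x ^ 2 + y ^ 2)]

theorem exampleU_nonneg_of_onPlane_neg {t : ℝ} (ht : 0 ≤ t) {q : H3}
    (hq : onPlane (-t, -t, 0) q) : 0 ≤ exampleU q := by
  obtain ⟨x, y, z⟩ := q
  have hz : z = t * (x - y) / 2 := by simp only [onPlane] at hq; linarith
  subst hz
  have hxyz : 0 ≤ (x - y) * (t * (x - y) / 2) := by nlinarith [sq_nonneg (x - y)]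
  simp only [exampleU]
  positivity

theorem Sop_exampleU_zero : Sop exampleU (0, 0, 0) = 0 := by
  refine le_antisymm ?_ (le_Sop fun q hq => exampleU_nonneg_of_onPlane_neg le_rfl (by simpa))
  simpa [exampleU] using Sop_le_apply bddBelow_range_exampleU (p := (0, 0, 0))

theorem Sop_exampleU_le (t : ℝ) :
    Sop exampleU (t, t, 0) ≤ -2 * t ^ 3 + 4 * t ^ 6 + 17 * t ^ 4 := by
  have h := Sop_le_midpoint bddBelow_range_exampleU (p := (t, t, 0)) (q₁ := (2 * t, 0, -t ^ 2))
    (q₂ := (0, 2 * t, t ^ 2)) (by simp only [onPlane]; ring) (by simp only [onPlane]; ring)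
    (by ext <;> simp only [Prod.fst_add, Prod.snd_add, Prod.smul_fst, Prod.smul_snd, smul_eq_mul]
        <;> ring)
  convert h using 1
  simp only [exampleU]
  ring

theorem Sop_exampleU_neg_le (t : ℝ) : Sop exampleU (-t, -t, 0) ≤ 4 * t ^ 4 :=
  (Sop_le_apply bddBelow_range_exampleU).trans_eq (by simp only [exampleU]; ring)

theorem S_not_hConvex_example :
    Continuous (fun p : H3 => (p.1 - p.2.1) * p.2.2 + (p.1 - p.2.1) ^ 2 * p.2.2 ^ 2
        + (p.1 ^ 2 + p.2.1 ^ 2) ^ 2 + p.2.2 ^ 2) ∧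
    BddBelow (Set.range (fun p : H3 => (p.1 - p.2.1) * p.2.2 + (p.1 - p.2.1) ^ 2 * p.2.2 ^ 2
        + (p.1 ^ 2 + p.2.1 ^ 2) ^ 2 + p.2.2 ^ 2)) ∧
    Coercive (fun p : H3 => (p.1 - p.2.1) * p.2.2 + (p.1 - p.2.1) ^ 2 * p.2.2 ^ 2
        + (p.1 ^ 2 + p.2.1 ^ 2) ^ 2 + p.2.2 ^ 2) ∧
    Sop (fun p : H3 => (p.1 - p.2.1) * p.2.2 + (p.1 - p.2.1) ^ 2 * p.2.2 ^ 2
        + (p.1 ^ 2 + p.2.1 ^ 2) ^ 2 + p.2.2 ^ 2) ((0 : ℝ), (0 : ℝ), (0 : ℝ)) = 0 ∧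
    ∃ t₀ > (0 : ℝ), ∀ t : ℝ, 0 < t → t < t₀ →
      Sop (fun p : H3 => (p.1 - p.2.1) * p.2.2 + (p.1 - p.2.1) ^ 2 * p.2.2 ^ 2
          + (p.1 ^ 2 + p.2.1 ^ 2) ^ 2 + p.2.2 ^ 2) (t, t, 0)
        ≤ -2 * t ^ 3 + 4 * t ^ 6 + 17 * t ^ 4 ∧
      0 ≤ Sop (fun p : H3 => (p.1 - p.2.1) * p.2.2 + (p.1 - p.2.1) ^ 2 * p.2.2 ^ 2
          + (p.1 ^ 2 + p.2.1 ^ 2) ^ 2 + p.2.2 ^ 2) (-t, -t, 0) ∧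
      Sop (fun p : H3 => (p.1 - p.2.1) * p.2.2 + (p.1 - p.2.1) ^ 2 * p.2.2 ^ 2
          + (p.1 ^ 2 + p.2.1 ^ 2) ^ 2 + p.2.2 ^ 2) (t, t, 0)
        + Sop (fun p : H3 => (p.1 - p.2.1) * p.2.2 + (p.1 - p.2.1) ^ 2 * p.2.2 ^ 2
          + (p.1 ^ 2 + p.2.1 ^ 2) ^ 2 + p.2.2 ^ 2) (-t, -t, 0)
        < 2 * Sop (fun p : H3 => (p.1 - p.2.1) * p.2.2 + (p.1 - p.2.1) ^ 2 * p.2.2 ^ 2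
          + (p.1 ^ 2 + p.2.1 ^ 2) ^ 2 + p.2.2 ^ 2) ((0 : ℝ), (0 : ℝ), (0 : ℝ)) := by
  change Continuous exampleU ∧ BddBelow (range exampleU) ∧ Coercive exampleU ∧
    Sop exampleU (0, 0, 0) = 0 ∧ ∃ t₀ > (0 : ℝ), ∀ t : ℝ, 0 < t → t < t₀ →
      Sop exampleU (t, t, 0) ≤ -2 * t ^ 3 + 4 * t ^ 6 + 17 * t ^ 4 ∧
      0 ≤ Sop exampleU (-t, -t, 0) ∧
      Sop exampleU (t, t, 0) + Sop exampleU (-t, -t, 0) < 2 * Sop exampleU (0, 0, 0)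
  refine ⟨by unfold exampleU; fun_prop, bddBelow_range_exampleU,
    coercive_of_sq_norm_le _ sq_norm_le_exampleU, Sop_exampleU_zero,
    1 / 11, by norm_num, fun t ht ht₀ => ⟨Sop_exampleU_le t,
      le_Sop fun _ => exampleU_nonneg_of_onPlane_neg ht.le, ?_⟩⟩
  have hcube : t ^ 3 < (1 / 11) ^ 3 := pow_lt_pow_left₀ ht₀ ht.le (by norm_num)
  have hsmall : 4 * t ^ 3 + 21 * t < 2 := by linarith
  calc Sop exampleU (t, t, 0) + Sop exampleU (-t, -t, 0)
      ≤ (-2 * t ^ 3 + 4 * t ^ 6 + 17 * t ^ 4) + 4 * t ^ 4 :=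
        add_le_add (Sop_exampleU_le t) (Sop_exampleU_neg_le t)
    _ = t ^ 3 * (4 * t ^ 3 + 21 * t - 2) := by ring
    _ < 0 := mul_neg_of_pos_of_neg (pow_pos ht 3) (by linarith)
    _ = 2 * Sop exampleU (0, 0, 0) := by rw [Sop_exampleU_zero, mul_zero]
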